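/- Let δ ∈ ℤ₂ be odd (not divisible by 2). Let C_{δ,1}(2^∞) be the subgroup of GL(2, ℤ₂) consisting of all invertible matrices of the form [[a+b, b],[δb, a]] with a, b ∈ ℤ₂, and let N_{δ,1}(2^∞) be the subgroup generated by C_{δ,1}(2^∞) and the matrix [[−1, 0],[1, 1]]. Then −Id is the square of an element of N_{δ,1}(2^∞), and consequently every subgroup of N_{δ,1}(2^∞) of index 2 contains −Id. -/

import Mathlib

open scoped MatrixGroups

/-- The involution `[[−1,0],[1,1]]` as an element of `GL(2, ℤ₂)`. -/
noncomputable def gammaOne : GL (Fin 2) ℤ_[2] :=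
  ⟨!![-1, 0; 1, 1], !![-1, 0; 1, 1],
    by ext i j; fin_cases i <;> fin_cases j <;>
      simp [Matrix.mul_apply, Fin.sum_univ_succ],
    by ext i j; fin_cases i <;> fin_cases j <;>
      simp [Matrix.mul_apply, Fin.sum_univ_succ]⟩

/-- The Cartan subgroup `C_{δ,1}(2^∞)`: all invertible matrices `[[a+b, b],[δb, a]]`
with `a, b ∈ ℤ₂`, as a subset of `GL(2, ℤ₂)`. -/
def cartanDeltaOne (δ : ℤ_[2]) : Set (GL (Fin 2) ℤ_[2]) :=
  {g | ∃ a b : ℤ_[2], (g : Matrix (Fin 2) (Fin 2) ℤ_[2]) = !![a + b, b; δ * b, a]}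

/-- `N_{δ,1}(2^∞)`, the subgroup of `GL(2, ℤ₂)` generated by `C_{δ,1}(2^∞)` and
`[[−1,0],[1,1]]`. -/
noncomputable def normalizerDeltaOne (δ : ℤ_[2]) : Subgroup (GL (Fin 2) ℤ_[2]) :=
  Subgroup.closure (cartanDeltaOne δ ∪ {gammaOne})

/-!
For `c ∈ C_{δ,1}` the product `c γ` has trace `0`, so by Cayley–Hamilton
`(c γ)² = -det(c γ) = det c`. It therefore suffices to find `c ∈ C_{δ,1}` of determinant `-1`: with `c = [[a+1, 1], [δ, a]]`
this is the equation `a² + a + 1 = δ`, solvable by Hensel's lemma since `δ` is odd.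
Any `g` with `g² = -1` in `N` puts `-1` into every index-`2` subgroup, as squares lie there.
-/

namespace PadicInt

lemma two_dvd_sub_one_of_not_two_dvd {x : ℤ_[2]} (hx : ¬ (2 : ℤ_[2]) ∣ x) :
    (2 : ℤ_[2]) ∣ x - 1 := by
  have two_dvd_iff (y : ℤ_[2]) : (2 : ℤ_[2]) ∣ y ↔ toZMod y = 0 := by
    rw [← RingHom.mem_ker, ker_toZMod, maximalIdeal_eq_span_p, Ideal.mem_span_singleton]
    norm_num
  have eq_one_of_ne_zero : ∀ z : ZMod 2, z ≠ 0 → z = 1 := by decide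
  rw [two_dvd_iff] at hx ⊢
  simp [eq_one_of_ne_zero _ hx]

lemma exists_sq_add_self_eq_of_two_dvd {c : ℤ_[2]} (hc : (2 : ℤ_[2]) ∣ c) :
    ∃ a : ℤ_[2], a ^ 2 + a = c := by
  open Polynomial in
  set F : ℤ_[2][X] := X ^ 2 + X - C c
  have hF₀ : ‖F.eval 0‖ < ‖F.derivative.eval 0‖ ^ 2 := by
    have : ‖c‖ < 1 := (norm_lt_one_iff_dvd c).2 (by exact_mod_cast hc)
    simpa [F, derivative_pow] using this
  obtain ⟨a, ha, -⟩ := hensels_lemma hF₀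
  exact ⟨a, by simpa [F, sub_eq_zero] using ha⟩

end PadicInt

lemma Matrix.sq_eq_neg_det_smul_one_of_trace_eq_zero {R : Type*} [CommRing R]
    {M : Matrix (Fin 2) (Fin 2) R} (hM : M.trace = 0) : M ^ 2 = -(M.det • 1) := by
  rw [Matrix.trace_fin_two] at hM
  have h11 : M 1 1 = -M 0 0 := by linear_combination hM
  ext i j
  fin_cases i <;> fin_cases j <;>
    simp [sq, Matrix.mul_apply, Fin.sum_univ_succ, Matrix.det_fin_two, h11] <;> ring

lemma Subgroup.sq_mem_of_relIndex_eq_two {G : Type*} [Group G] {H K : Subgroup G}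
    (h : H.relIndex K = 2) {g : G} (hg : g ∈ K) : g ^ 2 ∈ H :=
  Subgroup.mem_subgroupOf.mp (Subgroup.sq_mem_of_index_two h ⟨g, hg⟩)

lemma gammaOne_mem_normalizerDeltaOne (δ : ℤ_[2]) : gammaOne ∈ normalizerDeltaOne δ :=
  Subgroup.subset_closure (Or.inr rfl)

lemma mem_normalizerDeltaOne_of_mem_cartanDeltaOne {δ : ℤ_[2]} {c : GL (Fin 2) ℤ_[2]}
    (hc : c ∈ cartanDeltaOne δ) : c ∈ normalizerDeltaOne δ :=
  Subgroup.subset_closure (Or.inl hc)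

lemma sq_mul_gammaOne_of_mem_cartanDeltaOne {δ : ℤ_[2]} {c : GL (Fin 2) ℤ_[2]}
    (hc : c ∈ cartanDeltaOne δ) (hdet : (c : Matrix (Fin 2) (Fin 2) ℤ_[2]).det = -1) :
    (c * gammaOne) ^ 2 = -1 := by
  obtain ⟨a, b, hab⟩ := hc
  have hγ : (gammaOne : Matrix (Fin 2) (Fin 2) ℤ_[2]) = !![-1, 0; 1, 1] := rfl
  have htrace : (↑(c * gammaOne) : Matrix (Fin 2) (Fin 2) ℤ_[2]).trace = 0 := by
    simp [hab, hγ, Matrix.trace_fin_two]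
  have hdet' : (↑(c * gammaOne) : Matrix (Fin 2) (Fin 2) ℤ_[2]).det = 1 := by
    simp [Matrix.det_mul, hdet, hγ, Matrix.det_fin_two]
  ext1
  rw [Units.val_pow_eq_pow_val, Matrix.sq_eq_neg_det_smul_one_of_trace_eq_zero htrace, hdet',
    one_smul, Units.val_neg, Units.val_one]

lemma exists_mem_cartanDeltaOne_det_eq_neg_one {δ : ℤ_[2]} (hδ : ¬ (2 : ℤ_[2]) ∣ δ) :
    ∃ c ∈ cartanDeltaOne δ, (c : Matrix (Fin 2) (Fin 2) ℤ_[2]).det = -1 := by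
  obtain ⟨a, ha⟩ := PadicInt.exists_sq_add_self_eq_of_two_dvd
    (PadicInt.two_dvd_sub_one_of_not_two_dvd hδ)
  have hdet : (!![a + 1, 1; δ * 1, a] : Matrix (Fin 2) (Fin 2) ℤ_[2]).det = -1 := by
    rw [Matrix.det_fin_two_of]
    linear_combination ha
  exact ⟨Matrix.GeneralLinearGroup.mk'' _ (hdet ▸ isUnit_one.neg), ⟨a, 1, by simp⟩, hdet⟩

/-- Let `δ ∈ ℤ₂` be odd. Then `−Id` is the square of an element of
`N_{δ,1}(2^∞)`, and consequently every subgroup of `N_{δ,1}(2^∞)` of index `2`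
contains `−Id`. -/
theorem stmt_12 (δ : ℤ_[2]) (hδ : ¬ (2 : ℤ_[2]) ∣ δ) :
    (∃ g ∈ normalizerDeltaOne δ, g ^ 2 = (-1 : GL (Fin 2) ℤ_[2])) ∧
    ∀ H : Subgroup (GL (Fin 2) ℤ_[2]), H ≤ normalizerDeltaOne δ →
      H.relIndex (normalizerDeltaOne δ) = 2 → (-1 : GL (Fin 2) ℤ_[2]) ∈ H := by
  obtain ⟨c, hc, hdet⟩ := exists_mem_cartanDeltaOne_det_eq_neg_one hδ
  have hgN : c * gammaOne ∈ normalizerDeltaOne δ :=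
    mul_mem (mem_normalizerDeltaOne_of_mem_cartanDeltaOne hc) (gammaOne_mem_normalizerDeltaOne δ)
  have hg : (c * gammaOne) ^ 2 = -1 := sq_mul_gammaOne_of_mem_cartanDeltaOne hc hdet
  exact ⟨⟨_, hgN, hg⟩, fun H _ hH => hg ▸ Subgroup.sq_mem_of_relIndex_eq_two hH hgN⟩
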